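/- arXiv:2307.09298 — 8 statements merged into one kernel-verified Lean document; each statement's English description precedes it below -/
import Mathlib

section
/- Over a finite field F of size Q, the polynomials x0^2 - x0, x1^Q - x1, x2^Q - x2, (x0-1)(x1^2-x1), and (x0-1)(x1-1)(x2-1) generate the vanishing ideal of the set P^2 ⊂ F^3 of standard representatives of the projective plane over F, where P^2 = {(1,a,b) : a,b ∈ F} ∪ {(0,1,b) : b ∈ F} ∪ {(0,0,1)}. -/
/-!
P² is the disjoint union of the boxes `{1} × F × F`, `{0} × {1} × F` and `{0} × {0} × {1}`, and
`1 = x₀ + (1 - x₀) x₁ + (1 - x₀)(1 - x₁)` splits `f` accordingly. By Alon's combinatorial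
Nullstellensatz a polynomial vanishing on a box `∏ Sᵢ` lies in the ideal generated by the
`∏_{r ∈ Sᵢ} (xᵢ - r)`, and the three multipliers carry the generators of their box's ideal into
the ideal of the theorem.
-/

open MvPolynomial

theorem FiniteField.prod_univ_X_sub_C (K : Type*) [Field K] [Fintype K] :
    ∏ r : K, (Polynomial.X - Polynomial.C r) = Polynomial.X ^ Fintype.card K - Polynomial.X := by
  have hmonic : (Polynomial.X ^ Fintype.card K - Polynomial.X : Polynomial K).Monic :=
    Polynomial.monic_X_pow_sub (by simpa using Fintype.one_lt_card (α := K))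
  have := Polynomial.prod_multiset_X_sub_C_of_monic_of_roots_card_eq hmonic (by
    rw [roots_X_pow_card_sub_X, X_pow_card_sub_X_natDegree_eq K Fintype.one_lt_card]
    rfl)
  rwa [roots_X_pow_card_sub_X] at this

theorem MvPolynomial.prod_univ_X_sub_C {K σ : Type*} [Field K] [Fintype K] (i : σ) :
    ∏ r : K, (X i - C r : MvPolynomial σ K) = X i ^ Fintype.card K - X i := by
  simpa using congrArg (Polynomial.aeval (X i : MvPolynomial σ K)) (FiniteField.prod_univ_X_sub_C K)

theorem Ideal.mul_mem_of_mem_span_range {R ι : Type*} [CommSemiring R] {I : Ideal R}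
    {g : ι → R} {p f : R} (hf : f ∈ Ideal.span (Set.range g)) (hg : ∀ i, p * g i ∈ I) :
    p * f ∈ I := by
  induction hf using Submodule.span_induction with
  | mem x hx => obtain ⟨i, rfl⟩ := hx; exact hg i
  | zero => simp
  | add x y _ _ hx hy => rw [mul_add]; exact add_mem hx hy
  | smul a x _ hx => rw [smul_eq_mul, mul_left_comm]; exact I.mul_mem_left a hx

namespace MvPolynomial

variable {R : Type*} [CommRing R] [IsDomain R]

theorem mem_span_prod_X_sub_C_of_eval_eq_zero {σ : Type*} [Finite σ] (S : σ → Finset R)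
    (hS : ∀ i, (S i).Nonempty) (f : MvPolynomial σ R)
    (hf : ∀ x : σ → R, (∀ i, x i ∈ S i) → eval x f = 0) :
    f ∈ Ideal.span (Set.range fun i => ∏ r ∈ S i, (X i - C r)) := by
  obtain ⟨h, -, rfl⟩ := combinatorial_nullstellensatz_exists_linearCombination S hS f hf
  rw [Ideal.span, ← Finsupp.range_linearCombination]
  exact LinearMap.mem_range_self _ h

theorem mul_mem_of_eval_eq_zero_on_prod_fin_three {I : Ideal (MvPolynomial (Fin 3) R)}
    {p f : MvPolynomial (Fin 3) R} (S₀ S₁ S₂ : Finset R)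
    (h₀ : S₀.Nonempty) (h₁ : S₁.Nonempty) (h₂ : S₂.Nonempty)
    (hf : ∀ x : Fin 3 → R, x 0 ∈ S₀ → x 1 ∈ S₁ → x 2 ∈ S₂ → eval x f = 0)
    (hp₀ : p * ∏ r ∈ S₀, (X 0 - C r) ∈ I) (hp₁ : p * ∏ r ∈ S₁, (X 1 - C r) ∈ I)
    (hp₂ : p * ∏ r ∈ S₂, (X 2 - C r) ∈ I) : p * f ∈ I := by
  refine Ideal.mul_mem_of_mem_span_range (g := fun i => ∏ r ∈ ![S₀, S₁, S₂] i, (X i - C r))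
    (mem_span_prod_X_sub_C_of_eval_eq_zero _ (fun i => by fin_cases i <;> assumption) f
      fun x hx => hf x (hx 0) (hx 1) (hx 2)) fun i => ?_
  fin_cases i
  exacts [hp₀, hp₁, hp₂]

end MvPolynomial

section ProjectivePlane

variable {F : Type} [Field F] [Fintype F]

variable (F) in
def projPlanePoints : Set (Fin 3 → F) :=
  {v | v 0 = 1} ∪ {v | v 0 = 0 ∧ v 1 = 1} ∪ {v | v 0 = 0 ∧ v 1 = 0 ∧ v 2 = 1}

variable (F) in
def projPlaneGenerators : Set (MvPolynomial (Fin 3) F) :=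
  {X 0 ^ 2 - X 0, X 1 ^ Fintype.card F - X 1, X 2 ^ Fintype.card F - X 2,
    (X 0 - 1) * (X 1 ^ 2 - X 1), (X 0 - 1) * (X 1 - 1) * (X 2 - 1)}

theorem eval_eq_zero_of_mem_projPlaneGenerators {g : MvPolynomial (Fin 3) F} {v : Fin 3 → F}
    (hg : g ∈ projPlaneGenerators F) (hv : v ∈ projPlanePoints F) : eval v g = 0 := by
  simp only [projPlaneGenerators, Set.mem_insert_iff, Set.mem_singleton_iff] at hg
  rcases hv with (h0 | ⟨h0, h1⟩) | ⟨h0, h1, h2⟩ <;>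
    rcases hg with rfl | rfl | rfl | rfl | rfl <;>
    simp_all [FiniteField.pow_card]

theorem mem_span_projPlaneGenerators_of_eval_eq_zero {f : MvPolynomial (Fin 3) F}
    (hf : ∀ v ∈ projPlanePoints F, eval v f = 0) : f ∈ Ideal.span (projPlaneGenerators F) := by
  set I := Ideal.span (projPlaneGenerators F)
  have gen : ∀ c g, g ∈ projPlaneGenerators F → c * g ∈ I :=
    fun c g hg => I.mul_mem_left c (Ideal.subset_span hg)
  rw [show f = X 0 * f + (1 - X 0) * X 1 * f + (1 - X 0) * (1 - X 1) * f by ring]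
  refine add_mem (add_mem ?_ ?_) ?_
  · refine mul_mem_of_eval_eq_zero_on_prod_fin_three {1} .univ .univ (by simp)
      Finset.univ_nonempty Finset.univ_nonempty
      (fun x h₀ _ _ => hf x (.inl (.inl (by simpa using h₀)))) ?_ ?_ ?_
    · convert gen 1 (X 0 ^ 2 - X 0) (by simp [projPlaneGenerators]) using 1
      simp only [Finset.prod_singleton, C_1]; ring
    · rw [prod_univ_X_sub_C]; exact gen _ _ (by simp [projPlaneGenerators])
    · rw [prod_univ_X_sub_C]; exact gen _ _ (by simp [projPlaneGenerators])
  · refine mul_mem_of_eval_eq_zero_on_prod_fin_three {0} {1} .univ (by simp) (by simp)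
      Finset.univ_nonempty
      (fun x h₀ h₁ _ => hf x (.inl (.inr ⟨by simpa using h₀, by simpa using h₁⟩))) ?_ ?_ ?_
    · convert gen (-X 1) (X 0 ^ 2 - X 0) (by simp [projPlaneGenerators]) using 1
      simp only [Finset.prod_singleton, C_0]; ring
    · convert gen (-1) ((X 0 - 1) * (X 1 ^ 2 - X 1)) (by simp [projPlaneGenerators]) using 1
      simp only [Finset.prod_singleton, C_1]; ring
    · rw [prod_univ_X_sub_C]; exact gen _ _ (by simp [projPlaneGenerators])
  · refine mul_mem_of_eval_eq_zero_on_prod_fin_three {0} {0} {1} (by simp) (by simp) (by simp)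
      (fun x h₀ h₁ h₂ => hf x (.inr ⟨by simpa using h₀, by simpa using h₁, by simpa using h₂⟩))
      ?_ ?_ ?_
    · convert gen (X 1 - 1) (X 0 ^ 2 - X 0) (by simp [projPlaneGenerators]) using 1
      simp only [Finset.prod_singleton, C_0]; ring
    · convert gen 1 ((X 0 - 1) * (X 1 ^ 2 - X 1)) (by simp [projPlaneGenerators]) using 1
      simp only [Finset.prod_singleton, C_0]; ring
    · convert gen 1 ((X 0 - 1) * (X 1 - 1) * (X 2 - 1)) (by simp [projPlaneGenerators]) using 1
      simp only [Finset.prod_singleton, C_1]; ring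

end ProjectivePlane

/-- the listed polynomials generate the vanishing ideal of the set P² of
standard representatives of the projective plane over a finite field F of size Q. -/
theorem stmt_2 (F : Type) [Field F] [Fintype F] (Q : ℕ) (hQ : Q = Fintype.card F)
    (P2 : Set (Fin 3 → F))
    (hP2 : P2 = {v | v 0 = 1} ∪ {v | v 0 = 0 ∧ v 1 = 1} ∪
        {v | v 0 = 0 ∧ v 1 = 0 ∧ v 2 = 1})
    (f : MvPolynomial (Fin 3) F) :
    f ∈ Ideal.span ({X 0 ^ 2 - X 0, X 1 ^ Q - X 1, X 2 ^ Q - X 2,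
        (X 0 - 1) * (X 1 ^ 2 - X 1), (X 0 - 1) * (X 1 - 1) * (X 2 - 1)} :
          Set (MvPolynomial (Fin 3) F)) ↔
      ∀ v ∈ P2, eval v f = 0 := by
  subst hQ hP2
  refine ⟨fun hf v hv => ?_, mem_span_projPlaneGenerators_of_eval_eq_zero⟩
  exact (Ideal.span_le (I := RingHom.ker (eval v))).2
    (fun _ hg => eval_eq_zero_of_mem_projPlaneGenerators hg hv) hf
end

section
/- Over a finite field F of size Q, the zero set in F^{m+1} of the polynomials f_0 = x0^2 - x0, f_i = x_i^Q - x_i for 1 ≤ i ≤ m, g_k = (x0-1)(x1-1)···(x_{k-1}-1)(x_k^2 - x_k) for 1 ≤ k ≤ m-1, and g_m = (x0-1)(x1-1)···(x_m-1), is exactly the set P^m of standard representatives of projective m-space: P^m = ∪_{i=0}^m {(0,...,0,1,a_{i+1},...,a_m) : a_j ∈ F}, where the 1 is in coordinate i. -/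
/-!
Let `i` be the first coordinate with `xᵢ = 1`; it exists because `g_m` vanishes. For `k < i` no
coordinate before `k` equals `1`, so the prefix product in `g_k` (empty for `k = 0`, where `g_0` is
`f₀`) is nonzero and `x_k² = x_k` together with `x_k ≠ 1` forces `x_k = 0`. Conversely, at a
standard representative every `g_k` has a vanishing factor, and the `fᵢ` vanish on all of `F`.
-/

open Finset

section StandardRepresentative

variable {ι R : Type*} [LinearOrder ι] [Fintype ι] [CommRing R]

lemma sq_sub_self_eq_zero_iff [IsDomain R] {x : R} : x ^ 2 - x = 0 ↔ x = 0 ∨ x = 1 := by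
  rw [sub_eq_zero, sq]
  exact IsIdempotentElem.iff_eq_zero_or_one

lemma exists_eq_one_forall_lt_ne_one [IsDomain R] {v : ι → R} (h : ∏ j, (v j - 1) = 0) :
    ∃ i, v i = 1 ∧ ∀ j < i, v j ≠ 1 := by
  obtain ⟨j, -, hj⟩ := prod_eq_zero_iff.mp h
  obtain ⟨i, hi⟩ := exists_minimal_of_wellFoundedLT (fun i => v i = 1) ⟨j, sub_eq_zero.mp hj⟩
  exact ⟨i, minimal_iff_forall_lt.mp hi⟩

lemma eq_zero_of_prod_mul_sq_sub_self_eq_zero [IsDomain R] {v : ι → R} {k : ι}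
    (hne : ∀ j ≤ k, v j ≠ 1)
    (h : (∏ j ∈ univ.filter (· < k), (v j - 1)) * (v k ^ 2 - v k) = 0) : v k = 0 := by
  have hprod : ∏ j ∈ univ.filter (· < k), (v j - 1) ≠ 0 :=
    prod_ne_zero_iff.mpr fun j hj => sub_ne_zero.mpr (hne j (mem_filter.mp hj).2.le)
  exact (sq_sub_self_eq_zero_iff.mp ((mul_eq_zero.mp h).resolve_left hprod)).resolve_right
    (hne k le_rfl)

lemma prod_mul_sq_sub_self_eq_zero {v : ι → R} {i : ι} (hlt : ∀ j < i, v j = 0) (hi : v i = 1)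
    (k : ι) : (∏ j ∈ univ.filter (· < k), (v j - 1)) * (v k ^ 2 - v k) = 0 := by
  rcases lt_trichotomy k i with h | rfl | h
  · simp [hlt k h]
  · simp [hi]
  · rw [prod_eq_zero (mem_filter.mpr ⟨mem_univ i, h⟩) (sub_eq_zero.mpr hi), zero_mul]

end StandardRepresentative

theorem stmt_3_general (F : Type) [Field F] [Fintype F] (Q m : ℕ)
    (hQ : Q = Fintype.card F) (v : Fin (m + 1) → F) :
    ((v 0) ^ 2 - v 0 = 0 ∧
      (∀ i : Fin (m + 1), 1 ≤ (i : ℕ) → (v i) ^ Q - v i = 0) ∧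
      (∀ k : Fin (m + 1), 1 ≤ (k : ℕ) → (k : ℕ) ≤ m - 1 →
        (∏ j ∈ Finset.univ.filter (fun j : Fin (m + 1) => j < k), (v j - 1)) *
          ((v k) ^ 2 - v k) = 0) ∧
      (∏ j : Fin (m + 1), (v j - 1)) = 0) ↔
    ∃ i : Fin (m + 1), (∀ j, j < i → v j = 0) ∧ v i = 1 := by
  constructor
  · rintro ⟨h0, -, hg, hlast⟩
    obtain ⟨i, hi, hmin⟩ := exists_eq_one_forall_lt_ne_one hlast
    refine ⟨i, fun k hk => eq_zero_of_prod_mul_sq_sub_self_eq_zero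
      (fun j hj => hmin j (hj.trans_lt hk)) ?_, hi⟩
    obtain rfl | hk0 := eq_or_ne k 0
    · simpa using h0
    · have hki : (k : ℕ) < i := hk
      exact hg k (Nat.one_le_iff_ne_zero.mpr (Fin.val_ne_zero_iff.mpr hk0)) (by omega)
  · rintro ⟨i, hlt, hi⟩
    exact ⟨by simpa using prod_mul_sq_sub_self_eq_zero hlt hi 0,
      fun j _ => by rw [hQ, FiniteField.pow_card, sub_self],
      fun k _ _ => prod_mul_sq_sub_self_eq_zero hlt hi k,
      prod_eq_zero (mem_univ i) (sub_eq_zero.mpr hi)⟩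

/-- over a finite field F of size Q, the common zero set in F^{m+1} of
f₀ = x₀²-x₀, fᵢ = xᵢ^Q - xᵢ (1 ≤ i ≤ m), g_k = (x₀-1)⋯(x_{k-1}-1)(x_k²-x_k)
(1 ≤ k ≤ m-1), and g_m = (x₀-1)⋯(x_m-1) is exactly the set P^m of standard
representatives of projective m-space. -/
theorem stmt_3 (F : Type) [Field F] [Fintype F] (Q m : ℕ)
    (hQ : Q = Fintype.card F) (hm : 1 ≤ m) (v : Fin (m + 1) → F) :
    ((v 0) ^ 2 - v 0 = 0 ∧
      (∀ i : Fin (m + 1), 1 ≤ (i : ℕ) → (v i) ^ Q - v i = 0) ∧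
      (∀ k : Fin (m + 1), 1 ≤ (k : ℕ) → (k : ℕ) ≤ m - 1 →
        (∏ j ∈ Finset.univ.filter (fun j : Fin (m + 1) => j < k), (v j - 1)) *
          ((v k) ^ 2 - v k) = 0) ∧
      (∏ j : Fin (m + 1), (v j - 1)) = 0) ↔
    ∃ i : Fin (m + 1), (∀ j, j < i → v j = 0) ∧ v i = 1 :=
  stmt_3_general F Q m hQ v
end

section
/- Let F be a finite field of size Q and let a0 ≥ 1, a1 ≥ 1, a2 ≥ 0 be integers. Then the polynomials x0^{a0}·x1^{a1}·x2^{a2} and x1^{a1}x2^{a2} + (x0-1)(x2^{a2} + x1 - 1) take the same value at every point of P^2 = {(1,a,b) : a,b ∈ F} ∪ {(0,1,b) : b ∈ F} ∪ {(0,0,1)} ⊂ F^3. -/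
theorem stmt_7_general (F : Type) [Field F] (a0 a1 a2 : ℕ)
    (ha0 : 1 ≤ a0) (ha1 : 1 ≤ a1)
    (P2 : Set (Fin 3 → F))
    (hP2 : P2 = {v | v 0 = 1} ∪ {v | v 0 = 0 ∧ v 1 = 1} ∪
        {v | v 0 = 0 ∧ v 1 = 0 ∧ v 2 = 1}) :
    ∀ v ∈ P2, (v 0) ^ a0 * (v 1) ^ a1 * (v 2) ^ a2 =
      (v 1) ^ a1 * (v 2) ^ a2 + (v 0 - 1) * ((v 2) ^ a2 + v 1 - 1) := by
  subst hP2
  have hzero0 : (0 : F) ^ a0 = 0 := zero_pow (by omega)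
  have hzero1 : (0 : F) ^ a1 = 0 := zero_pow (by omega)
  rintro v ((hv0 | ⟨hv0, hv1⟩) | ⟨hv0, hv1, hv2⟩)
  · rw [hv0]; ring
  · rw [hv0, hv1, hzero0]; ring
  · rw [hv0, hv1, hv2, hzero0, hzero1]; ring

/-- for a₀ ≥ 1, a₁ ≥ 1, a₂ ≥ 0, the polynomials x₀^{a₀}x₁^{a₁}x₂^{a₂} and
x₁^{a₁}x₂^{a₂} + (x₀-1)(x₂^{a₂} + x₁ - 1) take the same value at every point of P². -/
theorem stmt_7 (F : Type) [Field F] [Fintype F] (a0 a1 a2 : ℕ)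
    (ha0 : 1 ≤ a0) (ha1 : 1 ≤ a1)
    (P2 : Set (Fin 3 → F))
    (hP2 : P2 = {v | v 0 = 1} ∪ {v | v 0 = 0 ∧ v 1 = 1} ∪
        {v | v 0 = 0 ∧ v 1 = 0 ∧ v 2 = 1}) :
    ∀ v ∈ P2, (v 0) ^ a0 * (v 1) ^ a1 * (v 2) ^ a2 =
      (v 1) ^ a1 * (v 2) ^ a2 + (v 0 - 1) * ((v 2) ^ a2 + v 1 - 1) :=
  stmt_7_general F a0 a1 a2 ha0 ha1 P2 hP2
end

section
/- Let F be a field and a0, a1, ..., am positive integers with m ≥ 1. Define recursively r_m = x_m^{a_m} + (x_{m-1} - 1) and r_k = x_k^{a_k}·x_{k+1}^{a_{k+1}}···x_m^{a_m} + (x_{k-1} - 1)·r_{k+1} for k = m-1, ..., 1. Then the polynomial x0^{a0}·x1^{a1}···x_m^{a_m} and the polynomial r_1 take the same value at every point of P^m ⊂ F^{m+1}, the set of standard representatives of projective m-space. -/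
/-!
Write `r k` for `rDown v a m (m - k)`, so `r 1` is the paper's `r₁`. If `v (k - 1) = 1` the
recursive term of `r k` vanishes and `r k = ∏_{j=k}^m v_j^{a_j}`; for `v 0 = 1` this is `r 1`,
which equals the monomial. Otherwise let `i ≥ 1` be the position of the leading `1`. Then
`r i = v_i^{a_i} P - P = 0` with `P = ∏_{j>i} v_j^{a_j}`, and for `k < i` the factor `v_k = 0`
kills the product in `r k`, so `r k = 0` propagates down to `r 1`; the monomial vanishes too.
-/

/-- The downward recursion of STATEMENT 8: `rDown v a m i` represents r_{m-i}, where
r_m = x_m^{a_m} + (x_{m-1} - 1) and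
r_k = x_k^{a_k}⋯x_m^{a_m} + (x_{k-1} - 1)·r_{k+1}. -/
noncomputable def rDown {F : Type} [Field F] (v : ℕ → F) (a : ℕ → ℕ) (m : ℕ) : ℕ → F
  | 0 => v m ^ a m + (v (m - 1) - 1)
  | i + 1 => (∏ j ∈ Finset.Icc (m - (i + 1)) m, v j ^ a j) +
      (v (m - (i + 1) - 1) - 1) * rDown v a m i

open Finset

lemma Finset.prod_Icc_eq_mul_prod_Icc_succ {M : Type*} [CommMonoid M] (f : ℕ → M) {k m : ℕ}
    (h : k ≤ m) : ∏ j ∈ Icc k m, f j = f k * ∏ j ∈ Icc (k + 1) m, f j := by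
  rw [Icc_eq_cons_Ioc h, prod_cons, Icc_add_one_left_eq_Ioc]

section rDown

variable {F : Type} [Field F] (v : ℕ → F) (a : ℕ → ℕ) {m : ℕ}

lemma rDown_sub_of_lt {k : ℕ} (hk : k < m) :
    rDown v a m (m - k) =
      (∏ j ∈ Icc k m, v j ^ a j) + (v (k - 1) - 1) * rDown v a m (m - (k + 1)) := by
  rw [show m - k = m - (k + 1) + 1 by omega, rDown, show m - (m - (k + 1) + 1) = k by omega]

lemma rDown_sub_eq_prod_of_pred_eq_one {k : ℕ} (hk : k ≤ m) (h1 : v (k - 1) = 1) :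
    rDown v a m (m - k) = ∏ j ∈ Icc k m, v j ^ a j := by
  rcases hk.lt_or_eq with hk | rfl
  · rw [rDown_sub_of_lt v a hk, h1]
    ring
  · rw [Nat.sub_self, rDown, h1, Icc_self, prod_singleton]
    ring

lemma rDown_sub_eq_zero_of_eq_one {i : ℕ} (hi : i ≤ m) (h0 : v (i - 1) = 0) (h1 : v i = 1) :
    rDown v a m (m - i) = 0 := by
  rcases hi.lt_or_eq with hi | rfl
  · rw [rDown_sub_of_lt v a hi, rDown_sub_eq_prod_of_pred_eq_one v a hi h1,
      prod_Icc_eq_mul_prod_Icc_succ _ hi.le, h1, h0]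
    ring
  · rw [Nat.sub_self, rDown, h1, h0]
    ring

lemma rDown_sub_eq_zero_of_succ {k : ℕ} (hk : k < m) (h0 : v k = 0) (ha : a k ≠ 0)
    (hsucc : rDown v a m (m - (k + 1)) = 0) : rDown v a m (m - k) = 0 := by
  rw [rDown_sub_of_lt v a hk, hsucc, prod_eq_zero (i := k) (by simp [hk.le]) (by simp [h0, ha])]
  ring

lemma rDown_sub_eq_zero_of_le {i : ℕ} (hi0 : 1 ≤ i) (him : i ≤ m)
    (hz : ∀ j < i, v j = 0) (h1 : v i = 1) (ha : ∀ j < i, a j ≠ 0) {k : ℕ} (hk : k ≤ i) :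
    rDown v a m (m - k) = 0 := by
  induction hk using Nat.decreasingInduction with
  | self => exact rDown_sub_eq_zero_of_eq_one v a him (hz _ (by omega)) h1
  | of_succ k hk ih => exact rDown_sub_eq_zero_of_succ v a (by omega) (hz k hk) (ha k hk) ih

end rDown

/-- for positive exponents a₀,…,a_m, the monomial x₀^{a₀}⋯x_m^{a_m} and the
recursively defined polynomial r₁ take the same value at every standard representative
point of projective m-space. -/
theorem stmt_8 (F : Type) [Field F] (m : ℕ) (hm : 1 ≤ m) (a : ℕ → ℕ)
    (ha : ∀ i ≤ m, 1 ≤ a i) (v : ℕ → F)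
    (hv : ∃ i ≤ m, (∀ j < i, v j = 0) ∧ v i = 1) :
    ∏ j ∈ Finset.range (m + 1), v j ^ a j = rDown v a m (m - 1) := by
  obtain ⟨i, him, hz, h1⟩ := hv
  rcases Nat.eq_zero_or_pos i with rfl | hi
  · rw [Nat.range_succ_eq_Icc_zero, prod_Icc_eq_mul_prod_Icc_succ _ (Nat.zero_le m), h1, one_pow,
      one_mul, rDown_sub_eq_prod_of_pred_eq_one v a hm h1]
  · have ha' : ∀ j < i, a j ≠ 0 := fun j hj => Nat.one_le_iff_ne_zero.mp (ha j (by omega))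
    rw [rDown_sub_eq_zero_of_le v a hi him hz h1 ha' hi,
      prod_eq_zero (mem_range.mpr (Nat.succ_pos m)) (by simp [hz 0 hi, ha' 0 hi])]
end

section
/- Let F be a finite field with Q elements, Q > 2, and let S = F[x0,x1,x2]. The set of (classes of) monomials {x1^{a1}·x2^{a2} : 0 ≤ a1,a2 ≤ Q-1} ∪ {x0·x2^{a2} : 0 ≤ a2 ≤ Q-1} ∪ {x0·x1} has cardinality Q^2 + Q + 1, which equals the cardinality of the set P^2 of standard projective representatives in F^3; moreover, the evaluation map sending a polynomial to its vector of values on P^2 restricts to an injective map on the F-linear span of this monomial set. -/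
/-!
An element of the span is `f = g(x₁, x₂) + x₀ h(x₂) + c x₀x₁` with `g` and `h` of degree
`< Q` in each variable. As `g` does not see `x₀`, comparing the values of `f` at `(0, 1, b)` and
`(1, 1, b)` gives `h(b) + c = 0`, and comparing them at `(0, 0, 1)` and `(1, 0, 1)` gives `c = 0`.
Hence `h`, and then by the values at `(1, a, b)` also `g`, vanish at every point; having degree
`< Q` in each variable, they are zero.
-/

open MvPolynomial

namespace MvPolynomial

variable {R σ : Type*} [CommSemiring R]

theorem eval_eq_of_mem_supported {s : Set σ} {p : MvPolynomial σ R} (hp : p ∈ supported R s)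
    {v w : σ → R} (hvw : ∀ i ∈ s, v i = w i) : eval v p = eval w p :=
  eval₂Hom_congr' rfl (fun i hi _ => hvw i (mem_supported.mp hp hi)) rfl

theorem X_mem_supported_of_mem {s : Set σ} {i : σ} (hi : i ∈ s) : X i ∈ supported R s :=
  Algebra.subset_adjoin (Set.mem_image_of_mem X hi)

theorem X_pow_mul_X_pow_eq_monomial (i j : σ) (a b : ℕ) :
    (X i ^ a * X j ^ b : MvPolynomial σ R) =
      monomial (Finsupp.single i a + Finsupp.single j b) 1 := by
  simp [X_pow_eq_monomial, monomial_mul]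

theorem X_pow_mul_X_pow_injective [Nontrivial R] {i j : σ} (hij : i ≠ j) :
    Function.Injective fun t : ℕ × ℕ => (X i ^ t.1 * X j ^ t.2 : MvPolynomial σ R) := by
  classical
  intro t t' h
  simp only [X_pow_mul_X_pow_eq_monomial] at h
  have he := monomial_left_injective (one_ne_zero (α := R)) h
  have hi := DFunLike.congr_fun he i
  have hj := DFunLike.congr_fun he j
  simp only [Finsupp.add_apply, Finsupp.single_apply, if_neg hij, if_neg hij.symm,
    add_zero, zero_add] at hi hj
  exact Prod.ext hi hj

theorem X_pow_mul_X_pow_mem_restrictDegree {i j : σ} (hij : i ≠ j) {a b n : ℕ}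
    (ha : a ≤ n) (hb : b ≤ n) : (X i ^ a * X j ^ b : MvPolynomial σ R) ∈ restrictDegree σ R n := by
  classical
  rw [X_pow_mul_X_pow_eq_monomial, restrictDegree, monomial_mem_restrictSupport]
  left
  intro k
  simp only [Finsupp.add_apply, Finsupp.single_apply]
  split_ifs with hik hjk
  exacts [absurd (hik.trans hjk.symm) hij, by omega, by omega, by omega]

end MvPolynomial

def projectivePlanePoints (R : Type*) [Zero R] [One R] : Set (Fin 3 → R) :=
  {v | v 0 = 1} ∪ {v | v 0 = 0 ∧ v 1 = 1} ∪ {v | v 0 = 0 ∧ v 1 = 0 ∧ v 2 = 1}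

theorem ncard_projectivePlanePoints (R : Type*) [Zero R] [One R] [NeZero (1 : R)] [Finite R] :
    (projectivePlanePoints R).ncard = Nat.card R ^ 2 + Nat.card R + 1 := by
  have h₁ : {v : Fin 3 → R | v 0 = 1} = Set.range fun p : R × R => ![1, p.1, p.2] := by
    ext v
    refine ⟨fun (hv : v 0 = 1) => ⟨(v 1, v 2), ?_⟩, by rintro ⟨p, rfl⟩; simp⟩
    ext i; fin_cases i <;> simp [hv]
  have h₂ : {v : Fin 3 → R | v 0 = 0 ∧ v 1 = 1} = Set.range fun b : R => ![0, 1, b] := by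
    ext v
    refine ⟨fun (hv : v 0 = 0 ∧ v 1 = 1) => ⟨v 2, ?_⟩, by rintro ⟨b, rfl⟩; simp⟩
    ext i; fin_cases i <;> simp [hv.1, hv.2]
  have h₃ : {v : Fin 3 → R | v 0 = 0 ∧ v 1 = 0 ∧ v 2 = 1} = {![0, 0, 1]} := by
    ext v
    refine ⟨fun (hv : v 0 = 0 ∧ v 1 = 0 ∧ v 2 = 1) => ?_, by rintro rfl; simp⟩
    ext i; fin_cases i <;> simp [hv.1, hv.2.1, hv.2.2]
  have hinj₁ : Function.Injective fun p : R × R => ![1, p.1, p.2] := fun p q h =>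
    Prod.ext (by simpa using congrFun h 1) (by simpa using congrFun h 2)
  have hinj₂ : Function.Injective fun b : R => ![0, 1, b] := fun a b h => by
    simpa using congrFun h 2
  rw [projectivePlanePoints, Set.ncard_union_eq, Set.ncard_union_eq, h₁, h₂, h₃,
    Set.ncard_range_of_injective hinj₁, Set.ncard_range_of_injective hinj₂]
  · simp [Nat.card_prod, sq]
  · rw [Set.disjoint_left]
    rintro v (hv : v 0 = 1) ⟨h0, -⟩
    exact one_ne_zero (hv.symm.trans h0)
  · rw [Set.disjoint_right]
    rintro v ⟨h0, h1, -⟩ (hv | ⟨-, hv⟩)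
    · exact one_ne_zero ((hv : v 0 = 1).symm.trans h0)
    · exact one_ne_zero (hv.symm.trans h1)

def standardMonomials (R : Type*) [CommSemiring R] (n : ℕ) : Set (MvPolynomial (Fin 3) R) :=
  {p | ∃ a1 ≤ n, ∃ a2 ≤ n, p = X 1 ^ a1 * X 2 ^ a2} ∪ {p | ∃ a2 ≤ n, p = X 0 * X 2 ^ a2} ∪
    {X 0 * X 1}

theorem ncard_standardMonomials (R : Type*) [CommSemiring R] [Nontrivial R] (n : ℕ) :
    (standardMonomials R n).ncard = (n + 1) ^ 2 + (n + 1) + 1 := by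
  have h₁ : {p : MvPolynomial (Fin 3) R | ∃ a1 ≤ n, ∃ a2 ≤ n, p = X 1 ^ a1 * X 2 ^ a2} =
      (fun t : ℕ × ℕ => X 1 ^ t.1 * X 2 ^ t.2) '' Set.Iic n ×ˢ Set.Iic n := by
    ext; simp [eq_comm, and_assoc]
  have h₂ : {p : MvPolynomial (Fin 3) R | ∃ a2 ≤ n, p = X 0 * X 2 ^ a2} =
      (fun b => X 0 * X 2 ^ b) '' Set.Iic n := by
    ext; simp [eq_comm]
  have hinj₂ : Function.Injective fun b => (X 0 * X 2 ^ b : MvPolynomial (Fin 3) R) := by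
    simpa [Function.comp_def] using
      (X_pow_mul_X_pow_injective (R := R) (show (0 : Fin 3) ≠ 2 by decide)).comp
        (Prod.mk_right_injective 1)
  have hne (v : Fin 3 → R) {p q : MvPolynomial (Fin 3) R} (h : eval v p ≠ eval v q) : p ≠ q :=
    fun hpq => h (by rw [hpq])
  rw [standardMonomials, h₁, h₂, Set.ncard_union_eq, Set.ncard_union_eq,
    Set.ncard_image_of_injective _ (X_pow_mul_X_pow_injective (by decide)),
    Set.ncard_image_of_injective _ hinj₂, Set.ncard_prod]
  · simp [sq]
  · rw [Set.disjoint_left]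
    rintro _ ⟨t, -, rfl⟩ ⟨b, -, h⟩
    exact hne ![0, 1, 1] (by simp) h
  · rw [Set.disjoint_singleton_right]
    rintro (⟨t, -, h⟩ | ⟨b, -, h⟩)
    · exact hne ![0, 1, 1] (by simp) h
    · exact hne ![1, 0, 1] (by simp) h

theorem exists_eq_of_mem_span_standardMonomials {R : Type*} [CommSemiring R] {n : ℕ}
    {f : MvPolynomial (Fin 3) R} (hf : f ∈ Submodule.span R (standardMonomials R n)) :
    ∃ g h : MvPolynomial (Fin 3) R, ∃ c : R,
      g ∈ restrictDegree (Fin 3) R n ∧ g ∈ supported R {1, 2} ∧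
      h ∈ restrictDegree (Fin 3) R n ∧ h ∈ supported R {2} ∧
      f = g + X 0 * h + c • (X 0 * X 1) := by
  rw [standardMonomials, Submodule.span_union, Submodule.span_union] at hf
  obtain ⟨y, hy, z, hz, rfl⟩ := Submodule.mem_sup.mp hf
  obtain ⟨g, hg, k, hk, rfl⟩ := Submodule.mem_sup.mp hy
  obtain ⟨c, rfl⟩ := Submodule.mem_span_singleton.mp hz
  have hX₁ : X 1 ∈ supported R ({1, 2} : Set (Fin 3)) := X_mem_supported_of_mem (by simp)
  have hX₂ : X 2 ∈ supported R ({1, 2} : Set (Fin 3)) := X_mem_supported_of_mem (by simp)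
  have hg' : g ∈ restrictDegree (Fin 3) R n ⊓ Subalgebra.toSubmodule (supported R {1, 2}) := by
    refine Submodule.span_le.mpr ?_ hg
    rintro _ ⟨a, ha, b, hb, rfl⟩
    exact ⟨X_pow_mul_X_pow_mem_restrictDegree (by decide) ha hb,
      (Subalgebra.mem_toSubmodule _).mpr (mul_mem (pow_mem hX₁ a) (pow_mem hX₂ b))⟩
  have hk' : k ∈ (Submodule.span R {p | ∃ b ≤ n, p = X 2 ^ b}).map (LinearMap.mulLeft R (X 0)) := by
    refine Submodule.span_le.mpr ?_ hk
    rintro _ ⟨b, hb, rfl⟩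
    exact ⟨X 2 ^ b, Submodule.subset_span ⟨b, hb, rfl⟩, rfl⟩
  obtain ⟨h, hh, rfl⟩ := hk'
  have hh' : h ∈ restrictDegree (Fin 3) R n ⊓ Subalgebra.toSubmodule (supported R {2}) := by
    refine Submodule.span_le.mpr ?_ hh
    rintro _ ⟨b, hb, rfl⟩
    have hdeg := X_pow_mul_X_pow_mem_restrictDegree (R := R) (show (1 : Fin 3) ≠ 2 by decide)
      (Nat.zero_le n) hb
    rw [pow_zero, one_mul] at hdeg
    exact ⟨hdeg, (Subalgebra.mem_toSubmodule _).mpr (pow_mem (X_mem_supported_of_mem (Set.mem_singleton 2)) b)⟩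
  exact ⟨g, h, c, hg'.1, hg'.2, hh'.1, hh'.2, rfl⟩

theorem eq_zero_of_eval_projectivePlanePoints {F : Type} [Field F] [Fintype F]
    {g h : MvPolynomial (Fin 3) F} {c : F}
    (hg : g ∈ restrictDegree (Fin 3) F (Fintype.card F - 1)) (hg₀ : g ∈ supported F {1, 2})
    (hh : h ∈ restrictDegree (Fin 3) F (Fintype.card F - 1)) (hh₀ : h ∈ supported F {2})
    (hzero : ∀ v ∈ projectivePlanePoints F, eval v (g + X 0 * h + c • (X 0 * X 1)) = 0) :
    g = 0 ∧ h = 0 ∧ c = 0 := by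
  have eval_g (v w : Fin 3 → F) (h1 : v 1 = w 1) (h2 : v 2 = w 2) : eval v g = eval w g :=
    eval_eq_of_mem_supported hg₀ (by simp [h1, h2])
  have eval_h (v w : Fin 3 → F) (h2 : v 2 = w 2) : eval v h = eval w h :=
    eval_eq_of_mem_supported hh₀ (by simp [h2])
  have h₁ (a b : F) : eval ![1, a, b] g + eval ![1, a, b] h + c * a = 0 := by
    simpa using hzero ![1, a, b] (by simp [projectivePlanePoints])
  have h₂ (b : F) : eval ![0, 1, b] g = 0 := by
    simpa using hzero ![0, 1, b] (by simp [projectivePlanePoints])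
  have h₃ : eval ![0, 0, 1] g = 0 := by
    simpa using hzero ![0, 0, 1] (by simp [projectivePlanePoints])
  have hhc (b : F) : eval ![1, 1, b] h + c = 0 := by
    have := h₁ 1 b
    rw [← eval_g ![0, 1, b] ![1, 1, b] rfl rfl, h₂ b] at this
    simpa using this
  have hc : c = 0 := by
    have := h₁ 0 1
    rw [← eval_g ![0, 0, 1] ![1, 0, 1] rfl rfl, h₃, eval_h ![1, 0, 1] ![1, 1, 1] rfl] at this
    linear_combination hhc 1 - this
  have hh0 : h = 0 := eq_zero_of_eval_eq_zero (Fin 3) F h (fun v => by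
    rw [eval_h v ![1, 1, v 2] rfl]; simpa [hc] using hhc (v 2)) hh
  refine ⟨eq_zero_of_eval_eq_zero (Fin 3) F g (fun v => ?_) hg, hh0, hc⟩
  rw [eval_g v ![1, v 1, v 2] rfl rfl]
  simpa [hh0, hc] using h₁ (v 1) (v 2)

theorem stmt_9_general (F : Type) [Field F] [Fintype F] (Q : ℕ)
    (hQ : Q = Fintype.card F)
    (P2 : Set (Fin 3 → F))
    (hP2 : P2 = {v | v 0 = 1} ∪ {v | v 0 = 0 ∧ v 1 = 1} ∪
        {v | v 0 = 0 ∧ v 1 = 0 ∧ v 2 = 1})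
    (B : Set (MvPolynomial (Fin 3) F))
    (hB : B = {p | ∃ a1 ≤ Q - 1, ∃ a2 ≤ Q - 1, p = X 1 ^ a1 * X 2 ^ a2} ∪
        {p | ∃ a2 ≤ Q - 1, p = X 0 * X 2 ^ a2} ∪ {X 0 * X 1}) :
    B.ncard = Q ^ 2 + Q + 1 ∧ P2.ncard = Q ^ 2 + Q + 1 ∧
      ∀ f ∈ Submodule.span F B, (∀ v ∈ P2, eval v f = 0) → f = 0 := by
  subst hQ hP2 hB
  refine ⟨?_, ?_, fun f hf hzero => ?_⟩
  · have hB := ncard_standardMonomials F (Fintype.card F - 1)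
    rwa [Nat.sub_add_cancel Fintype.card_pos] at hB
  · have hP2 := ncard_projectivePlanePoints F
    rwa [Nat.card_eq_fintype_card] at hP2
  · obtain ⟨g, h, c, hg, hg₀, hh, hh₀, rfl⟩ := exists_eq_of_mem_span_standardMonomials hf
    obtain ⟨rfl, rfl, rfl⟩ := eq_zero_of_eval_projectivePlanePoints hg hg₀ hh hh₀ hzero
    simp

/-- for Q > 2, the monomial set
{x₁^{a₁}x₂^{a₂} : 0 ≤ a₁,a₂ ≤ Q-1} ∪ {x₀x₂^{a₂} : 0 ≤ a₂ ≤ Q-1} ∪ {x₀x₁}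
has Q²+Q+1 elements, which is also |P²|, and evaluation on P² is injective on its span. -/
theorem stmt_9 (F : Type) [Field F] [Fintype F] (Q : ℕ)
    (hQ : Q = Fintype.card F) (hQ2 : 2 < Q)
    (P2 : Set (Fin 3 → F))
    (hP2 : P2 = {v | v 0 = 1} ∪ {v | v 0 = 0 ∧ v 1 = 1} ∪
        {v | v 0 = 0 ∧ v 1 = 0 ∧ v 2 = 1})
    (B : Set (MvPolynomial (Fin 3) F))
    (hB : B = {p | ∃ a1 ≤ Q - 1, ∃ a2 ≤ Q - 1, p = X 1 ^ a1 * X 2 ^ a2} ∪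
        {p | ∃ a2 ≤ Q - 1, p = X 0 * X 2 ^ a2} ∪ {X 0 * X 1}) :
    B.ncard = Q ^ 2 + Q + 1 ∧ P2.ncard = Q ^ 2 + Q + 1 ∧
      ∀ f ∈ Submodule.span F B, (∀ v ∈ P2, eval v f = 0) → f = 0 :=
  stmt_9_general F Q hQ P2 hP2 B hB
end

section
/- Let C ⊆ F_{q^s}^n be an F_{q^s}-linear code and let Tr: F_{q^s} → F_q be the field trace, applied componentwise. Then the dual (over F_q) of the subfield subcode C ∩ F_q^n equals Tr(C^⊥), where C^⊥ is the dual of C over F_{q^s} (intersected with nothing; Tr(C^⊥) ⊆ F_q^n). -/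
/-! For `x ∈ L^ι` and `b ∈ K^ι` the trace is compatible with the pairing: `Tr (x ⬝ᵥ b) = Tr x ⬝ᵥ b`.
Hence `Tr (C^⊥)` is orthogonal to the subfield subcode. Conversely, if `b ∈ K^ι` is orthogonal
to `Tr (C^⊥)`, then for every `x ∈ C^⊥` the trace vanishes on the whole line `L · (x ⬝ᵥ b)`,
because `C^⊥` is an `L`-subspace; nondegeneracy of the trace form of the separable extension
`L/K` forces `x ⬝ᵥ b = 0`, so `b ∈ C^⊥⊥ = C`. Double duality over `K` turns the two inclusions
into an equality. -/

open LinearMap (BilinForm)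

section DualCode

variable {K ι : Type*} [Field K] [Fintype ι]

def dualCode (C : Submodule K (ι → K)) : Submodule K (ι → K) :=
  BilinForm.orthogonal (dotProductBilin K K) C

theorem mem_dualCode {C : Submodule K (ι → K)} {x : ι → K} :
    x ∈ dualCode C ↔ ∀ c ∈ C, x ⬝ᵥ c = 0 := by
  simp only [dualCode, BilinForm.mem_orthogonal_iff, dotProductBilin_apply_apply, dotProduct_comm]

theorem dotProductBilin_isRefl : BilinForm.IsRefl (dotProductBilin K K : BilinForm K (ι → K)) :=
  fun v w h => by rwa [dotProductBilin_apply_apply, dotProduct_comm] at h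

theorem dotProductBilin_nondegenerate :
    BilinForm.Nondegenerate (dotProductBilin K K : BilinForm K (ι → K)) :=
  ⟨dotProduct_eq_zero, fun w h => dotProduct_eq_zero w fun v => by rw [dotProduct_comm]; exact h v⟩

theorem dualCode_dualCode (C : Submodule K (ι → K)) : dualCode (dualCode C) = C :=
  BilinForm.orthogonal_orthogonal dotProductBilin_nondegenerate dotProductBilin_isRefl C

theorem dualCode_antitone : Antitone (dualCode : Submodule K (ι → K) → Submodule K (ι → K)) :=
  fun _ _ h => BilinForm.orthogonal_le h

theorem dualCode_le_comm {C D : Submodule K (ι → K)} : dualCode C ≤ D ↔ dualCode D ≤ C :=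
  have key (C D : Submodule K (ι → K)) (h : dualCode C ≤ D) : dualCode D ≤ C :=
    dualCode_dualCode C ▸ dualCode_antitone h
  ⟨key C D, key D C⟩

end DualCode

section SubfieldSubcode

variable (K : Type*) {L ι : Type*} [Field K] [Field L] [Algebra K L]

def subfieldSubcode (C : Submodule L (ι → L)) : Submodule K (ι → K) :=
  (C.restrictScalars K).comap ((Algebra.linearMap K L).compLeft ι)

noncomputable def traceCode (D : Submodule L (ι → L)) : Submodule K (ι → K) :=
  (D.restrictScalars K).map ((Algebra.trace K L).compLeft ι)

variable {K}

theorem mem_subfieldSubcode {C : Submodule L (ι → L)} {b : ι → K} :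
    b ∈ subfieldSubcode K C ↔ algebraMap K L ∘ b ∈ C := Iff.rfl

theorem mem_traceCode {D : Submodule L (ι → L)} {t : ι → K} :
    t ∈ traceCode K D ↔ ∃ x ∈ D, Algebra.trace K L ∘ x = t := Iff.rfl

variable [Fintype ι]

theorem trace_dotProduct_algebraMap (x : ι → L) (b : ι → K) :
    Algebra.trace K L (x ⬝ᵥ algebraMap K L ∘ b) = (Algebra.trace K L ∘ x) ⬝ᵥ b := by
  simp only [dotProduct, map_sum, Function.comp_apply]
  refine Finset.sum_congr rfl fun i _ => ?_
  rw [mul_comm, ← Algebra.smul_def, map_smul, smul_eq_mul, mul_comm]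

theorem traceCode_dualCode_le_dualCode_subfieldSubcode (C : Submodule L (ι → L)) :
    traceCode K (dualCode C) ≤ dualCode (subfieldSubcode K C) := by
  intro t ht
  obtain ⟨x, hx, rfl⟩ := mem_traceCode.1 ht
  refine mem_dualCode.2 fun b hb => ?_
  rw [← trace_dotProduct_algebraMap, mem_dualCode.1 hx _ (mem_subfieldSubcode.1 hb), map_zero]

theorem dualCode_traceCode_dualCode_le_subfieldSubcode [FiniteDimensional K L]
    [Algebra.IsSeparable K L] (C : Submodule L (ι → L)) :
    dualCode (traceCode K (dualCode C)) ≤ subfieldSubcode K C := by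
  intro b hb
  rw [mem_subfieldSubcode, ← dualCode_dualCode C, mem_dualCode]
  intro x hx
  rw [dotProduct_comm]
  refine (traceForm_nondegenerate K L).2 _ fun c => ?_
  rw [Algebra.traceForm_apply, ← smul_eq_mul, ← smul_dotProduct, trace_dotProduct_algebraMap,
    dotProduct_comm]
  exact mem_dualCode.1 hb _ ⟨c • x, (dualCode C).smul_mem c hx, rfl⟩

theorem dualCode_subfieldSubcode [FiniteDimensional K L] [Algebra.IsSeparable K L]
    (C : Submodule L (ι → L)) : dualCode (subfieldSubcode K C) = traceCode K (dualCode C) :=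
  le_antisymm (dualCode_le_comm.1 (dualCode_traceCode_dualCode_le_subfieldSubcode C))
    (traceCode_dualCode_le_dualCode_subfieldSubcode C)

theorem exists_mem_dualCode_subfieldSubcode_iff (C : Submodule L (ι → L)) (y : ι → L) :
    (∃ b ∈ dualCode (subfieldSubcode K C), algebraMap K L ∘ b = y) ↔
      (∀ i, y i ∈ (algebraMap K L).range) ∧
        ∀ c ∈ C, (∀ i, c i ∈ (algebraMap K L).range) → y ⬝ᵥ c = 0 := by
  constructor
  · rintro ⟨b, hb, rfl⟩
    refine ⟨fun i => ⟨b i, rfl⟩, fun c hc hcK => ?_⟩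
    choose a ha using hcK
    obtain rfl : algebraMap K L ∘ a = c := funext ha
    rw [← RingHom.map_dotProduct, mem_dualCode.1 hb a hc, map_zero]
  · rintro ⟨hyK, hy⟩
    choose b hb using hyK
    obtain rfl : algebraMap K L ∘ b = y := funext hb
    refine ⟨b, mem_dualCode.2 fun a ha => (algebraMap K L).injective ?_, rfl⟩
    rw [RingHom.map_dotProduct, map_zero]
    exact hy _ ha fun i => ⟨a i, rfl⟩

theorem exists_mem_traceCode_dualCode_iff (C : Submodule L (ι → L)) (y : ι → L) :
    (∃ t ∈ traceCode K (dualCode C), algebraMap K L ∘ t = y) ↔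
      ∃ x, (∀ c ∈ C, x ⬝ᵥ c = 0) ∧ ∀ i, y i = algebraMap K L (Algebra.trace K L (x i)) := by
  constructor
  · rintro ⟨_, ⟨x, hx, rfl⟩, rfl⟩
    exact ⟨x, mem_dualCode.1 hx, fun i => rfl⟩
  · rintro ⟨x, hx, hy⟩
    exact ⟨_, ⟨x, mem_dualCode.2 hx, rfl⟩, funext fun i => (hy i).symm⟩

end SubfieldSubcode

theorem stmt_11_general (Fq F : Type) [Field Fq] [Field F] [Fintype F]
    [Algebra Fq F] (n : ℕ) (C : Submodule F (Fin n → F)) :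
    {y : Fin n → F | (∀ i, y i ∈ (algebraMap Fq F).range) ∧
        ∀ c ∈ C, (∀ i, c i ∈ (algebraMap Fq F).range) → ∑ i, y i * c i = 0} =
      {y : Fin n → F | ∃ x : Fin n → F, (∀ c ∈ C, ∑ i, x i * c i = 0) ∧
        ∀ i, y i = algebraMap Fq F (Algebra.trace Fq F (x i))} := by
  ext y
  calc _ ↔ ∃ b ∈ dualCode (subfieldSubcode Fq C), algebraMap Fq F ∘ b = y :=
        (exists_mem_dualCode_subfieldSubcode_iff C y).symm
    _ ↔ ∃ t ∈ traceCode Fq (dualCode C), algebraMap Fq F ∘ t = y := by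
        rw [dualCode_subfieldSubcode]
    _ ↔ _ := exists_mem_traceCode_dualCode_iff C y

/-- Delsarte: the dual over F_q of the subfield subcode C ∩ F_q^n equals
Tr(C^⊥), everything embedded in F_{q^s}^n via the inclusion F_q ⊆ F_{q^s}
(realized as the range of the algebra map). -/
theorem stmt_11 (Fq F : Type) [Field Fq] [Fintype Fq] [Field F] [Fintype F]
    [Algebra Fq F] (n : ℕ) (C : Submodule F (Fin n → F)) :
    {y : Fin n → F | (∀ i, y i ∈ (algebraMap Fq F).range) ∧
        ∀ c ∈ C, (∀ i, c i ∈ (algebraMap Fq F).range) → ∑ i, y i * c i = 0} =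
      {y : Fin n → F | ∃ x : Fin n → F, (∀ c ∈ C, ∑ i, x i * c i = 0) ∧
        ∀ i, y i = algebraMap Fq F (Algebra.trace Fq F (x i))} :=
  stmt_11_general Fq F n C
end

section
/- Let F_{q^s} ⊇ F_q be finite fields and C ⊆ F_{q^s}^n a linear code that is Galois invariant, i.e., C^q = C where the q-th power is taken componentwise. Then Tr(C) = C ∩ F_q^n, where Tr is the componentwise field trace from F_{q^s} to F_q. -/
/-! Over a finite field `K` with `q` elements, `trace[L/K] x = ∑_{j < [L:K]} x ^ q ^ j`, so a code
stable under the componentwise `q`-th power contains the trace of each of its words. Conversely,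
a word `y` of `C` with coordinates in `K` is the trace of `α • y ∈ C` for any `α` of trace `1`. -/

open Finset

theorem Set.MapsTo.pi_pow_pow {ι M : Type*} [Monoid M] {S : Set (ι → M)} {q : ℕ}
    (h : Set.MapsTo (fun c i => c i ^ q) S S) (j : ℕ) :
    Set.MapsTo (fun c i => c i ^ q ^ j) S S := by
  induction j with
  | zero => intro c hc; simpa only [pow_zero, pow_one] using hc
  | succ j ih =>
    intro c hc
    simpa only [pow_succ', pow_mul] using ih (h hc)

namespace Submodule

variable {K L ι : Type*} [Field K] [Field L] [Algebra K L]

theorem algebraMap_trace_mem_of_mapsTo_pow [Fintype K] [Finite L] (C : Submodule L (ι → L))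
    (hC : Set.MapsTo (fun (c : ι → L) i => c i ^ Fintype.card K) C C) {c : ι → L} (hc : c ∈ C) :
    (fun i => algebraMap K L (Algebra.trace K L (c i))) ∈ C := by
  have htrace : (fun i => algebraMap K L (Algebra.trace K L (c i))) =
      ∑ j ∈ range (Module.finrank K L), fun i => c i ^ Fintype.card K ^ j := by
    funext i
    simp only [FiniteField.algebraMap_trace_eq_sum_pow, Finset.sum_apply,
      Fintype.card_eq_nat_card]
  rw [htrace]
  exact C.sum_mem fun j _ => hC.pi_pow_pow j hc

theorem exists_algebraMap_trace_eq_of_mem_range [FiniteDimensional K L]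
    [Algebra.IsSeparable K L] (C : Submodule L (ι → L)) {y : ι → L} (hy : y ∈ C)
    (hyK : ∀ i, y i ∈ (algebraMap K L).range) :
    ∃ x ∈ C, ∀ i, y i = algebraMap K L (Algebra.trace K L (x i)) := by
  obtain ⟨α, hα⟩ := Algebra.trace_surjective K L 1
  refine ⟨α • y, C.smul_mem α hy, fun i => ?_⟩
  obtain ⟨a, ha⟩ := hyK i
  rw [Pi.smul_apply, ← ha, smul_eq_mul, mul_comm, ← Algebra.smul_def,
    LinearMap.map_smul_of_tower, hα, smul_eq_mul, mul_one]

end Submodule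

/-- if C ⊆ F_{q^s}^n is Galois invariant (C^q = C componentwise), then
Tr(C) = C ∩ F_q^n, embedded in F_{q^s}^n via the inclusion F_q ⊆ F_{q^s}. -/
theorem stmt_12 (Fq F : Type) [Field Fq] [Fintype Fq] [Field F] [Fintype F]
    [Algebra Fq F] (n : ℕ) (C : Submodule F (Fin n → F))
    (hGal : (fun c : Fin n → F => fun i => c i ^ Fintype.card Fq) ''
        (C : Set (Fin n → F)) = (C : Set (Fin n → F))) :
    {y : Fin n → F | ∃ x ∈ C, ∀ i, y i = algebraMap Fq F (Algebra.trace Fq F (x i))} =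
      {y : Fin n → F | y ∈ C ∧ ∀ i, y i ∈ (algebraMap Fq F).range} := by
  ext y
  constructor
  · rintro ⟨x, hx, hy⟩
    have hyx : y = fun i => algebraMap Fq F (Algebra.trace Fq F (x i)) := funext hy
    refine ⟨?_, fun i => ⟨_, (hy i).symm⟩⟩
    rw [hyx]
    exact C.algebraMap_trace_mem_of_mapsTo_pow (Set.mapsTo_iff_image_subset.mpr hGal.le) hx
  · rintro ⟨hy, hyK⟩
    exact C.exists_algebraMap_trace_eq_of_mem_range hy hyK
end

section
/- Let F_{q^s} ⊇ F_q be finite fields and C ⊆ F_{q^s}^n a Galois invariant linear code (C^q = C). Then the minimum distance of the dual of the subfield subcode satisfies wt((C ∩ F_q^n)^⊥) ≥ wt(C^⊥), where the first dual is over F_q and the second over F_{q^s}. -/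
open Finset

/-! The componentwise trace of a codeword of `C` is a sum of Frobenius iterates, hence again in
`C`, and it has entries in `F_q`; so `y` is orthogonal to it. By `F_q`-linearity of the trace this
says `Tr (a * ⟪y, c⟫) = 0` for every `a`, and nondegeneracy of the trace form gives `⟪y, c⟫ = 0`.
Thus `y` itself lies in `C^⊥`. -/

section

variable {ι R : Type*} [Monoid R]

theorem pow_pow_mem_of_image_pow_eq {q : ℕ} {S : Set (ι → R)}
    (hS : (fun c : ι → R => fun i => c i ^ q) '' S = S) {c : ι → R} (hc : c ∈ S) (k : ℕ) :
    (fun i => c i ^ q ^ k) ∈ S := by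
  have hmaps : Set.MapsTo (fun c : ι → R => fun i => c i ^ q) S S := fun _ hc =>
    hS ▸ Set.mem_image_of_mem _ hc
  convert hmaps.iterate k hc using 1
  induction k with
  | zero => simp
  | succ k ih =>
    rw [Function.iterate_succ_apply', ← ih]
    funext i
    rw [pow_succ, pow_mul]

end

section

variable {ι K L : Type*} [Field K] [Fintype K] [Field L] [Finite L] [Algebra K L]

theorem algebraMap_trace_mem_of_image_pow_eq {C : Submodule L (ι → L)}
    (hGal : (fun c : ι → L => fun i => c i ^ Fintype.card K) '' (C : Set (ι → L)) = C)
    {c : ι → L} (hc : c ∈ C) :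
    (fun i => algebraMap K L (Algebra.trace K L (c i))) ∈ C := by
  have hsum : (fun i => algebraMap K L (Algebra.trace K L (c i))) =
      ∑ k ∈ range (Module.finrank K L), fun i => c i ^ Fintype.card K ^ k := by
    funext i
    simp only [FiniteField.algebraMap_trace_eq_sum_pow, Nat.card_eq_fintype_card, Finset.sum_apply]
  rw [hsum]
  exact C.sum_mem fun k _ => pow_pow_mem_of_image_pow_eq hGal hc k

theorem sum_mul_eq_zero_of_orthogonal_subfieldSubcode [Fintype ι] {C : Submodule L (ι → L)}
    (hGal : (fun c : ι → L => fun i => c i ^ Fintype.card K) '' (C : Set (ι → L)) = C)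
    {y : ι → L} (hyK : ∀ i, y i ∈ (algebraMap K L).range)
    (hy : ∀ c ∈ C, (∀ i, c i ∈ (algebraMap K L).range) → ∑ i, y i * c i = 0)
    {c : ι → L} (hc : c ∈ C) :
    ∑ i, y i * c i = 0 := by
  choose r hr using hyK
  refine (traceForm_nondegenerate K L).1 _ fun a => ?_
  have hac : (fun i => algebraMap K L (Algebra.trace K L (a * c i))) ∈ C :=
    algebraMap_trace_mem_of_image_pow_eq hGal (C.smul_mem a hc)
  have h := hy _ hac fun i => RingHom.mem_range_self _ _
  apply FaithfulSMul.algebraMap_injective K L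
  calc algebraMap K L (Algebra.traceForm K L (∑ i, y i * c i) a)
      = ∑ i, y i * algebraMap K L (Algebra.trace K L (a * c i)) := by
        have hsmul : (∑ i, y i * c i) * a = ∑ i, r i • (a * c i) := by
          simp only [sum_mul, ← hr, Algebra.smul_def]
          exact sum_congr rfl fun i _ => by ring
        rw [Algebra.traceForm_apply, hsmul, map_sum, map_sum]
        simp only [map_smul, smul_eq_mul, map_mul, hr]
    _ = 0 := h
    _ = algebraMap K L 0 := (map_zero _).symm

end

/-- for a Galois invariant code C ⊆ F_{q^s}^n, the minimum distance of the
dual (over F_q) of the subfield subcode is at least the minimum distance of C^⊥: every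
nonzero codeword of (C ∩ F_q^n)^⊥ has weight at least that of some nonzero codeword of
C^⊥. -/
theorem stmt_13 (Fq F : Type) [Field Fq] [Fintype Fq] [Field F] [Fintype F]
    [DecidableEq F] [Algebra Fq F] (n : ℕ) (C : Submodule F (Fin n → F))
    (hGal : (fun c : Fin n → F => fun i => c i ^ Fintype.card Fq) ''
        (C : Set (Fin n → F)) = (C : Set (Fin n → F))) :
    ∀ y : Fin n → F,
      ((∀ i, y i ∈ (algebraMap Fq F).range) ∧
        ∀ c ∈ C, (∀ i, c i ∈ (algebraMap Fq F).range) → ∑ i, y i * c i = 0) →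
      y ≠ 0 →
      ∃ z : Fin n → F, (∀ c ∈ C, ∑ i, z i * c i = 0) ∧ z ≠ 0 ∧
        hammingNorm z ≤ hammingNorm y := by
  rintro y ⟨hyFq, hy⟩ hy0
  exact ⟨y, fun c hc => sum_mul_eq_zero_of_orthogonal_subfieldSubcode hGal hyFq hy hc, hy0, le_rfl⟩
end
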